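/- Let (Γ,S) be a δ-hyperbolic group, let R > 0, d ∈ ℕ, C₁₈, C₁₉ ≥ 0, and let Θ'_* : C_*(Γ;ℂ) → C_*(Γ;ℂ) be a Γ-equivariant chain map with Θ'₀ = id, Θ'ₙ = 0 for all n ≥ d, image contained in C_*^R(Γ;ℂ), Supp(Θ'(α)) ⊆ geod_{C₁₈}(Supp(α)) and ∥Θ'(α)∥₁ ≤ C₁₉·(diam(Supp(α))+1) for every simplex α. Define ∇̃ on C_*(Γ,Ad(ℂΓ)) by ∇̃[g₀,…,gₙ;v] = Σ_{i=0}^{n} (−1)^i [Θ'([g₀,…,g_i]), g_i,…,gₙ; v]. Then: (i) ∂∘∇̃ + ∇̃∘∂ = Id in every degree ≥ d; (ii) there is a constant C₂₀ ≥ 0 (depending only on δ, R, d, C₁₈) such that for every twisted simplex α, every simplex occurring in ∇̃(α) with nonzero coefficient has weight at most |α| + C₂₀; (iii) there is a constant C₂₁ ≥ 0 (depending only on d and C₁₉) such that ∥∇̃([g₀,…,gₙ;v])∥₁ ≤ C₂₁·(1 + d_S(g₀,g₁) + ⋯ + d_S(g_{k−1},g_k)) with k = min(n,d), for all n and all g₀,…,gₙ,v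 ∈ Γ. -/

import Mathlib

noncomputable section

open Finsupp

/-- Word length with respect to a generating set `S`. -/
def wordLen {Γ : Type} [Group Γ] (S : Set Γ) (g : Γ) : ℕ :=
  sInf {n | ∃ l : List Γ, (∀ x ∈ l, x ∈ S) ∧ l.length = n ∧ l.prod = g}

/-- The word metric `d_S(g,h) = ℓ_S(g⁻¹h)`. -/
def dS {Γ : Type} [Group Γ] (S : Set Γ) (g h : Γ) : ℕ := wordLen S (g⁻¹ * h)

/-- The Gromov product `(x|y)_w` with respect to the word metric. -/
def gpS {Γ : Type} [Group Γ] (S : Set Γ) (x y w : Γ) : ℝ :=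
  ((dS S x w : ℝ) + (dS S y w : ℝ) - (dS S x y : ℝ)) / 2

/-- `(Γ,S)` is a `δ`-hyperbolic group: `S` is a finite symmetric generating set and
the word metric satisfies the four point condition with constant `δ`. -/
def IsHypGroup {Γ : Type} [Group Γ] (S : Set Γ) (δ : ℝ) : Prop :=
  S.Finite ∧ (∀ s ∈ S, s⁻¹ ∈ S) ∧ Subgroup.closure S = ⊤ ∧
  ∀ x y z w : Γ, min (gpS S x y w) (gpS S y z w) - δ ≤ gpS S x z w

/-- The degree-`n` part of the Bar chain complex of `Γ` with complex coefficients. -/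
abbrev BarC (Γ : Type) (n : ℕ) : Type := (Fin (n+1) → Γ) →₀ ℂ

/-- The simplicial differential of the Bar chain complex. -/
def barD (Γ : Type) (n : ℕ) : BarC Γ (n+1) →ₗ[ℂ] BarC Γ n :=
  Finsupp.lsum ℂ fun x => ∑ i : Fin (n+2), ((-1:ℂ)^(i:ℕ)) •
    (Finsupp.lsingle (x ∘ i.succAbove) : ℂ →ₗ[ℂ] BarC Γ n)

/-- The `Γ`-action on Bar chains by left translation. -/
def actB {Γ : Type} [Group Γ] (g : Γ) (n : ℕ) : BarC Γ n →ₗ[ℂ] BarC Γ n :=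
  Finsupp.lmapDomain ℂ ℂ fun t => fun j => g * t j

/-- The support of a Bar chain: the union of the supports of the simplices occurring
with nonzero coefficient. -/
def chainSupp {Γ : Type} {n : ℕ} (c : BarC Γ n) : Set Γ :=
  {x | ∃ t ∈ c.support, ∃ j, t j = x}

/-- The λ-geodesic hull
`geod_λ(Y) = {x : ∃ y,y' ∈ Y, d(y,x)+d(x,y') ≤ d(y,y')+λ}`. -/
def geodN {Γ : Type} [Group Γ] (S : Set Γ) (lam : ℝ) (Y : Set Γ) : Set Γ :=
  {x | ∃ y ∈ Y, ∃ y' ∈ Y, (dS S y x : ℝ) + (dS S x y' : ℝ) ≤ (dS S y y' : ℝ) + lam}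

/-- The `ℓ¹`-norm of a Bar chain. -/
def l1norm {Γ : Type} {n : ℕ} (c : BarC Γ n) : ℝ := ∑ t ∈ c.support, ‖c t‖

/-- The diameter of (the support of) a simplex in the word metric. -/
def tupDiam {Γ : Type} [Group Γ] (S : Set Γ) {n : ℕ} (t : Fin (n+1) → Γ) : ℕ :=
  Finset.univ.sup fun p : Fin (n+1) × Fin (n+1) => dS S (t p.1) (t p.2)

/-- The twisted Bar complex `C_*(Γ, Ad(ℂΓ))`, with basis the symbols `[g₀,…,gₙ;v]`. -/
abbrev TBar (Γ : Type) (n : ℕ) : Type := ((Fin (n+1) → Γ) × Γ) →₀ ℂ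

/-- The simplicial differential on the twisted Bar complex. -/
def tbarD (Γ : Type) (n : ℕ) : TBar Γ (n+1) →ₗ[ℂ] TBar Γ n :=
  Finsupp.lsum ℂ fun gv => ∑ i : Fin (n+2), ((-1:ℂ)^(i:ℕ)) •
    (Finsupp.lsingle (gv.1 ∘ i.succAbove, gv.2) : ℂ →ₗ[ℂ] TBar Γ n)

/-- A chain is supported on the Rips complex of parameter `R` if all simplices in its
support have pairwise distances at most `R`. -/
def InRips {Γ : Type} [Group Γ] (S : Set Γ) (R : ℝ) {n : ℕ} (c : BarC Γ n) : Prop :=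
  ∀ u ∈ c.support, ∀ i j : Fin (n+1), (dS S (u i) (u j) : ℝ) ≤ R

/-- The weight `|[g₀,…,gₙ;v]| = d(g₀,g₁)+⋯+d(g_{n−1},gₙ)+d(gₙ,vg₀)`. -/
def twt {Γ : Type} [Group Γ] (S : Set Γ) (v : Γ) {n : ℕ} (g : Fin (n+1) → Γ) : ℕ :=
  (∑ i : Fin n, dS S (g i.castSucc) (g i.succ)) + dS S (g (Fin.last n)) (v * g 0)

/-- The `ℓ¹`-norm of a twisted Bar chain. -/
def l1T {Γ : Type} {n : ℕ} (c : TBar Γ n) : ℝ := ∑ t ∈ c.support, ‖c t‖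

/-- The weighted `ℓ¹`-norm `∥Σ aα·α∥_λ = Σ|aα|·λ^{|α|}` on twisted Bar chains. -/
def tnormP {Γ : Type} [Group Γ] (S : Set Γ) (lam : ℝ) {n : ℕ} (c : TBar Γ n) : ℝ :=
  ∑ t ∈ c.support, ‖c t‖ * lam ^ (twt S t.2 t.1)

/-- The front part `[g₀,…,g_i]` of a tuple. -/
def frontTuple {Γ : Type} {n : ℕ} (i : Fin (n+1)) (g : Fin (n+1) → Γ) :
    Fin ((i:ℕ)+1) → Γ := fun j => g (Fin.castLE (by have := i.isLt; omega) j)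

/-- Appending the tail `g_i,…,gₙ` (and twisting element `v`) to a chain of
`(i+1)`-tuples: this realizes `c ↦ [c, g_i,…,gₙ; v]`. -/
def appendTv {Γ : Type} {n : ℕ} (i : Fin (n+1)) (g : Fin (n+1) → Γ) (v : Γ) :
    BarC Γ (i:ℕ) →ₗ[ℂ] TBar Γ (n+1) :=
  Finsupp.lmapDomain ℂ ℂ fun a => (fun k : Fin (n+2) =>
    if h : (k:ℕ) < (i:ℕ)+1 then a ⟨k, h⟩
    else g ⟨(k:ℕ)-1, by have := k.isLt; omega⟩, v)

/-- The operator `∇̃[g₀,…,gₙ;v] = Σᵢ(−1)^i [Θ'([g₀,…,g_i]), g_i,…,gₙ; v]`. -/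
def nablaT {Γ : Type} [Group Γ] (Θ : ∀ m, BarC Γ m →ₗ[ℂ] BarC Γ m) (n : ℕ) :
    TBar Γ n →ₗ[ℂ] TBar Γ (n+1) :=
  Finsupp.lsum ℂ fun gv => LinearMap.toSpanSingleton ℂ _
    (∑ i : Fin (n+1), ((-1:ℂ)^(i:ℕ)) •
      (appendTv i gv.1 gv.2) (Θ (i:ℕ) (Finsupp.single (frontTuple i gv.1) 1)))


/-!
(i) The faces of the `i`-th term `[Θ'[g₀,…,gᵢ], gᵢ,…,gₙ; v]` of `∇̃[g₀,…,gₙ;v]` are of three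
kinds. Deleting an entry of the tail `gᵢ₊₁,…,gₙ` gives, up to sign, a term of `∇̃∂`. Deleting an
entry of `Θ'[g₀,…,gᵢ]` gives, after summation and because `Θ'` is a chain map,
`[Θ'∂[g₀,…,gᵢ], gᵢ,…,gₙ; v]`, which cancels the remaining terms of `∇̃∂` together with the face
of the `(i-1)`-st term deleting `gᵢ₋₁`. What survives is the face of
`[Θ'₀[g₀], g₀,…,gₙ; v] = [g₀, g₀,…,gₙ; v]` deleting its first entry, which is the identity, and the
face of the top term deleting `gₙ`, which vanishes because `Θ'ₙ = 0`.

(ii) A simplex of `∇̃[g₀,…,gₙ;v]` is `[a₀,…,aᵢ, gᵢ,…,gₙ; v]` with `i < d` and `a` in the support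
of `Θ'[g₀,…,gᵢ]`. By left invariance `d(gₙ, v a₀) ≤ d(gₙ, v g₀) + d(g₀, a₀)`, so its weight exceeds
`|[g₀,…,gₙ;v]|` by at most the excess of the detour `g₀ → a₀ → ⋯ → aᵢ → gᵢ` over the path
`g₀ → ⋯ → gᵢ`. As the `aⱼ` are pairwise `R`-close and `aᵢ` is `C₁₈`-close to a geodesic between
two of `g₀,…,gᵢ`, that excess is at most `(i+1)R + C₁₈`.

(iii) At most `d` terms of `∇̃[g₀,…,gₙ;v]` are nonzero, the `i`-th has `ℓ¹`-norm at most
`C₁₉ (diam[g₀,…,gᵢ] + 1)`, and that diameter is at most the length of the path `g₀ → ⋯ → gᵢ`.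
-/

section Tuples
variable {Γ : Type}

def tupleSeq {p : ℕ} (x : Fin (p+1) → Γ) (t : ℕ) : Γ := x ⟨min t p, by omega⟩

def faceAt {p : ℕ} (k : ℕ) (x : Fin (p+1) → Γ) : Fin p → Γ :=
  fun j => if (j:ℕ) < k then x j.castSucc else x j.succ

def frontTupleNat {n : ℕ} (i : ℕ) (g : Fin (n+1) → Γ) : Fin (i+1) → Γ :=
  fun j => tupleSeq g j

/-- `appendTuple i g a = [a₀,…,aᵢ, gᵢ,…,gₙ]`. -/
def appendTuple {n : ℕ} (i : ℕ) (g : Fin (n+1) → Γ) (a : Fin (i+1) → Γ) :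
    Fin (n+2) → Γ :=
  fun k => if h : (k:ℕ) < i+1 then a ⟨k, h⟩ else g ⟨(k:ℕ)-1, by have := k.isLt; omega⟩

lemma tupleSeq_of_le {p : ℕ} (x : Fin (p+1) → Γ) {t : ℕ} (ht : t ≤ p) :
    tupleSeq x t = x ⟨t, by omega⟩ := by
  simp [tupleSeq, Nat.min_eq_left ht]

lemma tupleSeq_appendTuple {n i : ℕ} (hin : i ≤ n) (g : Fin (n+1) → Γ) (a : Fin (i+1) → Γ)
    (t : ℕ) :
    tupleSeq (appendTuple i g a) t = if t ≤ i then tupleSeq a t else tupleSeq g (t-1) := by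
  simp only [tupleSeq, appendTuple]
  split_ifs <;> first | omega | (congr 1; ext; simp; omega)

lemma comp_succAbove_eq_faceAt {p : ℕ} (k : Fin (p+2)) (x : Fin (p+2) → Γ) :
    x ∘ k.succAbove = faceAt k x := by
  funext j
  simp only [Function.comp_apply, Fin.succAbove, faceAt, Fin.lt_def, Fin.val_castSucc]
  exact apply_ite x _ _ _

lemma frontTuple_eq_frontTupleNat {n : ℕ} (i : Fin (n+1)) (g : Fin (n+1) → Γ) :
    frontTuple i g = frontTupleNat i g := by
  funext j
  simp only [frontTuple, frontTupleNat, tupleSeq]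
  congr 1
  ext
  simp only [Fin.val_castLE]
  omega

lemma faceAt_zero_appendTuple_zero {n : ℕ} (g : Fin (n+1) → Γ) (a : Fin 1 → Γ) :
    faceAt 0 (appendTuple 0 g a) = g := by
  funext ⟨j, hj⟩
  simp [faceAt, appendTuple]

lemma faceAt_succ_appendTuple {n : ℕ} (i : ℕ) (g : Fin (n+2) → Γ) (a : Fin (i+1) → Γ) :
    faceAt (i+1) (appendTuple i g a) = appendTuple i (faceAt 0 g) a := by
  funext ⟨j, hj⟩
  simp only [faceAt, appendTuple, Fin.castSucc_mk, Fin.succ_mk]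
  split_ifs <;> first | rfl | omega | (congr 1; ext; simp; omega)

lemma faceAt_appendTuple_of_lt {n : ℕ} {i k : ℕ} (hik : i + 1 < k) (g : Fin (n+2) → Γ)
    (a : Fin (i+1) → Γ) :
    faceAt k (appendTuple i g a) = appendTuple i (faceAt (k-1) g) a := by
  funext ⟨j, hj⟩
  simp only [faceAt, appendTuple, Fin.castSucc_mk, Fin.succ_mk]
  split_ifs <;> first | rfl | omega | (congr 1; ext; simp; omega)

lemma faceAt_appendTuple_succ_of_le {n : ℕ} {i k : ℕ} (hk : k ≤ i + 1) (g : Fin (n+2) → Γ)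
    (a : Fin (i+2) → Γ) :
    faceAt k (appendTuple (i+1) g a) = appendTuple i (faceAt 0 g) (faceAt k a) := by
  funext ⟨j, hj⟩
  simp only [faceAt, appendTuple, Fin.castSucc_mk, Fin.succ_mk]
  split_ifs <;> first | rfl | omega | (congr 1; ext; simp; omega)

lemma appendTuple_faceAt_zero_of_le {n : ℕ} {i k : ℕ} (hk : k ≤ i) (g : Fin (n+2) → Γ) :
    appendTuple i (faceAt 0 g) = appendTuple i (faceAt k g) := by
  funext a ⟨j, hj⟩
  simp only [faceAt, appendTuple, Fin.castSucc_mk, Fin.succ_mk]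
  split_ifs <;> first | rfl | omega

lemma faceAt_frontTupleNat_succ {n i : ℕ} (k : ℕ) (hi : i ≤ n) (g : Fin (n+2) → Γ) :
    faceAt k (frontTupleNat (i+1) g) = frontTupleNat i (faceAt k g) := by
  funext ⟨j, hj⟩
  simp only [faceAt, frontTupleNat, tupleSeq, Fin.castSucc_mk, Fin.succ_mk]
  split_ifs <;> first | omega | (congr 1; ext; simp <;> omega)

lemma frontTupleNat_faceAt_of_lt {n i k : ℕ} (hik : i < k) (hi : i ≤ n) (g : Fin (n+2) → Γ) :
    frontTupleNat i (faceAt k g) = frontTupleNat i g := by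
  funext ⟨j, hj⟩
  simp only [faceAt, frontTupleNat, tupleSeq, Fin.castSucc_mk, Fin.succ_mk]
  rw [if_pos (by omega)]
  congr 1
  ext
  simp
  omega

end Tuples

section AlternatingSums
variable {R M : Type*} [Ring R] [AddCommGroup M] [Module R M]

lemma alternating_sum_split {m i : ℕ} (hi : i ≤ m + 1) (f u : ℕ → M)
    (hfu : ∀ k, i + 2 ≤ k → k ≤ m + 2 → f k = u (k-1)) :
    ∑ k ∈ Finset.range (m+3), (-1:R)^k • f k =
      ∑ k ∈ Finset.range (i+1), (-1:R)^k • f k + (-1:R)^(i+1) • f (i+1)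
        - ∑ k ∈ Finset.Ico (i+1) (m+2), (-1:R)^k • u k := by
  have hback : ∑ k ∈ Finset.Ico (i+2) (m+3), (-1:R)^k • f k =
      -∑ k ∈ Finset.Ico (i+1) (m+2), (-1:R)^k • u k := by
    rw [Finset.sum_Ico_eq_sum_range, Finset.sum_Ico_eq_sum_range, ← Finset.sum_neg_distrib,
      show m + 3 - (i + 2) = m + 2 - (i + 1) by omega]
    refine Finset.sum_congr rfl fun t ht => ?_
    rw [Finset.mem_range] at ht
    rw [hfu (i+2+t) (by omega) (by omega), show i + 2 + t = (i + 1 + t) + 1 by omega,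
      pow_succ, mul_neg_one, neg_smul, Nat.add_sub_cancel]
  rw [← Finset.sum_range_add_sum_Ico _ (by omega : i + 2 ≤ m + 3), hback, Finset.sum_range_succ,
    sub_eq_add_neg]

/-- The sign bookkeeping of `∂∇̃ + ∇̃∂ = id`: `F i k` stands for the `k`-th face of the
`i`-th term of `∇̃`, and `U i k` for the `i`-th term of `∇̃` of the `k`-th face. -/
theorem alternating_double_sum_eq (m : ℕ) (e : M) (F U : ℕ → ℕ → M)
    (h₀ : F 0 0 = e)
    (hfront : ∀ i ≤ m, ∑ k ∈ Finset.range (i+2), (-1:R)^k • F (i+1) k =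
      ∑ k ∈ Finset.range (i+1), (-1:R)^k • U i k + (-1:R)^(i+1) • F i (i+1))
    (htop : F (m+1) (m+2) = 0)
    (hback : ∀ i k, i + 2 ≤ k → k ≤ m + 2 → F i k = U i (k-1)) :
    ∑ i ∈ Finset.range (m+2), (-1:R)^i • ∑ k ∈ Finset.range (m+3), (-1:R)^k • F i k
      + ∑ k ∈ Finset.range (m+2), (-1:R)^k • ∑ i ∈ Finset.range (m+1), (-1:R)^i • U i k
      = e := by
  set P : ℕ → M := fun i => ∑ k ∈ Finset.range (i+1), (-1:R)^k • F i k
  set A : ℕ → M := fun i => ∑ k ∈ Finset.range (i+1), (-1:R)^k • U i k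
  set Q : ℕ → M := fun i => ∑ k ∈ Finset.Ico (i+1) (m+2), (-1:R)^k • U i k
  have hP : ∑ i ∈ Finset.range (m+2), (-1:R)^i • P i =
      e + ∑ j ∈ Finset.range (m+1), (F j (j+1) - (-1:R)^j • A j) := by
    rw [Finset.sum_range_succ', add_comm]
    simp only [P, zero_add, Finset.sum_range_one, pow_zero, one_smul, h₀]
    congr 1
    refine Finset.sum_congr rfl fun j hj => ?_
    rw [hfront j (by simp at hj; omega), smul_add, smul_smul, ← pow_add,
      Even.neg_one_pow ⟨j+1, rfl⟩, one_smul, pow_succ, mul_neg_one, neg_smul]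
    abel
  have hcomm :
      ∑ k ∈ Finset.range (m+2), (-1:R)^k • ∑ i ∈ Finset.range (m+1), (-1:R)^i • U i k
      = ∑ i ∈ Finset.range (m+1), (-1:R)^i • (A i + Q i) := by
    simp only [Finset.smul_sum]
    rw [Finset.sum_comm]
    refine Finset.sum_congr rfl fun i hi => ?_
    simp only [A, Q]
    rw [Finset.sum_range_add_sum_Ico _ (by simp at hi; omega), Finset.smul_sum]
    exact Finset.sum_congr rfl fun k _ => by
      rw [smul_smul, smul_smul, ← pow_add, ← pow_add, add_comm]
  have hQtop : Q (m+1) = 0 := by simp [Q]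
  rw [Finset.sum_congr rfl fun i hi =>
    by rw [alternating_sum_split (by simp at hi; omega) (F i) (U i) (hback i)], hcomm]
  have hodd : ∀ i, (-1:R)^(i + (i + 1)) = -1 := fun i => Odd.neg_one_pow ⟨i, by ring⟩
  simp only [smul_sub, smul_add, smul_smul, ← pow_add, hodd, neg_one_smul,
    Finset.sum_sub_distrib, Finset.sum_add_distrib]
  rw [hP, Finset.sum_range_succ (fun i => -F i (i+1)), htop,
    Finset.sum_range_succ (fun i => (-1:R)^i • Q i), hQtop]
  simp only [Finset.sum_sub_distrib, Finset.sum_neg_distrib, smul_zero]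
  abel

end AlternatingSums

section Operators
variable {Γ : Type}

lemma barD_eq_sum_lmapDomain (p : ℕ) :
    barD Γ p =
      ∑ k ∈ Finset.range (p+2), (-1:ℂ)^k • lmapDomain ℂ ℂ (faceAt (p := p+1) k) := by
  refine lhom_ext fun x b => ?_
  rw [← Fin.sum_univ_eq_sum_range
    (fun k => (-1:ℂ)^k • lmapDomain ℂ ℂ (faceAt (p := p+1) k))]
  simp [barD, comp_succAbove_eq_faceAt]

lemma tbarD_single (p : ℕ) (x : Fin (p+2) → Γ) (v : Γ) (b : ℂ) :
    tbarD Γ p (single (x, v) b) =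
      ∑ k ∈ Finset.range (p+2), (-1:ℂ)^k • single (faceAt k x, v) b := by
  rw [← Fin.sum_univ_eq_sum_range (fun k => (-1:ℂ)^k • single (faceAt k x, v) b)]
  simp [tbarD, comp_succAbove_eq_faceAt]

lemma tbarD_mapDomain (p : ℕ) {β : Type} (f : β → Fin (p+2) → Γ) (v : Γ)
    (c : β →₀ ℂ) :
    tbarD Γ p (mapDomain (fun a => (f a, v)) c) =
      ∑ k ∈ Finset.range (p+2), (-1:ℂ)^k • mapDomain (fun a => (faceAt k (f a), v)) c := by
  induction c using Finsupp.induction_linear with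
  | zero => simp
  | add c₁ c₂ h₁ h₂ =>
    simp only [mapDomain_add, map_add, h₁, h₂, smul_add, Finset.sum_add_distrib]
  | single a b => simp [tbarD_single]

end Operators

section AppendTerms
variable {Γ : Type} (Θ : ∀ m, BarC Γ m →ₗ[ℂ] BarC Γ m)

/-- `appendTerm Θ x g v i = [Θ[x₀,…,xᵢ], gᵢ,…,gₙ; v]`. -/
def appendTerm {n p : ℕ} (x : Fin (p+1) → Γ) (g : Fin (n+1) → Γ) (v : Γ) (i : ℕ) :
    TBar Γ (n+1) :=
  mapDomain (fun a => (appendTuple i g a, v)) (Θ i (single (frontTupleNat i x) 1))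

def appendTermFace {n : ℕ} (g : Fin (n+1) → Γ) (v : Γ) (i k : ℕ) : TBar Γ n :=
  mapDomain (fun a => (faceAt k (appendTuple i g a), v)) (Θ i (single (frontTupleNat i g) 1))

lemma nablaT_single [Group Γ] (n : ℕ) (g : Fin (n+1) → Γ) (v : Γ) :
    nablaT Θ n (single (g, v) 1) =
      ∑ i ∈ Finset.range (n+1), (-1:ℂ)^i • appendTerm Θ g g v i := by
  rw [← Fin.sum_univ_eq_sum_range (fun i => (-1:ℂ)^i • appendTerm Θ g g v i), nablaT,
    lsum_single, LinearMap.toSpanSingleton_apply_one]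
  simp only [appendTerm, ← frontTuple_eq_frontTupleNat]
  rfl

lemma tbarD_appendTerm {n : ℕ} (g : Fin (n+1) → Γ) (v : Γ) (i : ℕ) :
    tbarD Γ n (appendTerm Θ g g v i) =
      ∑ k ∈ Finset.range (n+2), (-1:ℂ)^k • appendTermFace Θ g v i k :=
  tbarD_mapDomain n _ v _

lemma appendTermFace_zero_zero (h0 : Θ 0 = LinearMap.id) {n : ℕ} (g : Fin (n+1) → Γ)
    (v : Γ) :
    appendTermFace Θ g v 0 0 = single (g, v) 1 := by
  simp [appendTermFace, h0, faceAt_zero_appendTuple_zero]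

lemma appendTermFace_succ {n : ℕ} (g : Fin (n+2) → Γ) (v : Γ) (i : ℕ) :
    appendTermFace Θ g v i (i+1) = appendTerm Θ g (faceAt 0 g) v i := by
  simp only [appendTermFace, appendTerm, faceAt_succ_appendTuple]

lemma appendTermFace_of_lt {n i k : ℕ} (hik : i + 1 < k) (hk : k ≤ n + 2) (g : Fin (n+2) → Γ)
    (v : Γ) :
    appendTermFace Θ g v i k = appendTerm Θ (faceAt (k-1) g) (faceAt (k-1) g) v i := by
  simp only [appendTermFace, appendTerm, faceAt_appendTuple_of_lt hik,
    frontTupleNat_faceAt_of_lt (by omega : i < k - 1) (by omega : i ≤ n)]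

lemma appendTermFace_front (hcm : ∀ n, (barD Γ n).comp (Θ (n+1)) = (Θ n).comp (barD Γ n))
    {n i : ℕ} (hi : i ≤ n) (g : Fin (n+2) → Γ) (v : Γ) :
    ∑ k ∈ Finset.range (i+2), (-1:ℂ)^k • appendTermFace Θ g v (i+1) k =
      ∑ k ∈ Finset.range (i+1), (-1:ℂ)^k • appendTerm Θ (faceAt k g) (faceAt k g) v i
        + (-1:ℂ)^(i+1) • appendTermFace Θ g v i (i+1) := by
  set L := lmapDomain ℂ ℂ (fun b => (appendTuple i (faceAt 0 g) b, v)) with hL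
  have hface : ∀ k ≤ i + 1, appendTermFace Θ g v (i+1) k =
      L (lmapDomain ℂ ℂ (faceAt k) (Θ (i+1) (single (frontTupleNat (i+1) g) 1))) := by
    intro k hk
    simp only [appendTermFace, L, lmapDomain_apply, ← mapDomain_comp]
    congr 1
    funext a
    simp only [Function.comp_apply, faceAt_appendTuple_succ_of_le hk]
  have hchain : ∑ k ∈ Finset.range (i+2),
      (-1:ℂ)^k • lmapDomain ℂ ℂ (faceAt k) (Θ (i+1) (single (frontTupleNat (i+1) g) 1)) =
      ∑ k ∈ Finset.range (i+2), (-1:ℂ)^k • Θ i (single (frontTupleNat i (faceAt k g)) 1) :=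
    calc _ = barD Γ i (Θ (i+1) (single (frontTupleNat (i+1) g) 1)) := by
          simp [barD_eq_sum_lmapDomain, LinearMap.sum_apply]
      _ = Θ i (barD Γ i (single (frontTupleNat (i+1) g) 1)) :=
          LinearMap.congr_fun (hcm i) _
      _ = _ := by
          simp only [barD_eq_sum_lmapDomain, LinearMap.sum_apply, LinearMap.smul_apply,
            lmapDomain_apply, mapDomain_single, map_sum, map_smul, faceAt_frontTupleNat_succ _ hi]
  rw [Finset.sum_congr rfl fun k hk => by rw [hface k (by simp at hk; omega), ← map_smul],
    ← map_sum, hchain, map_sum, Finset.sum_range_succ, appendTermFace_succ]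
  congr 1
  · refine Finset.sum_congr rfl fun k hk => ?_
    rw [map_smul, hL, lmapDomain_apply,
      appendTuple_faceAt_zero_of_le (by simpa [Nat.lt_succ_iff] using hk)]
    rfl
  · rw [map_smul, frontTupleNat_faceAt_of_lt (Nat.lt_succ_self i) hi]
    rfl

end AppendTerms

theorem tbarD_comp_nablaT_add_nablaT_comp_tbarD {Γ : Type} [Group Γ]
    (Θ : ∀ n, BarC Γ n →ₗ[ℂ] BarC Γ n)
    (hcm : ∀ n, (barD Γ n).comp (Θ (n+1)) = (Θ n).comp (barD Γ n))
    (h0 : Θ 0 = LinearMap.id) {m : ℕ} (htop : Θ (m+1) = 0) :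
    (tbarD Γ (m+1)).comp (nablaT Θ (m+1)) + (nablaT Θ m).comp (tbarD Γ m) = LinearMap.id := by
  refine lhom_ext' fun ⟨g, v⟩ => LinearMap.ext_ring ?_
  simp only [LinearMap.add_apply, LinearMap.comp_apply, lsingle_apply, LinearMap.id_apply]
  rw [nablaT_single, map_sum, tbarD_single, map_sum]
  simp only [map_smul, tbarD_appendTerm, nablaT_single]
  exact alternating_double_sum_eq m _ (appendTermFace Θ g v)
    (fun i k => appendTerm Θ (faceAt k g) (faceAt k g) v i) (appendTermFace_zero_zero Θ h0 g v)
    (fun i hi => appendTermFace_front Θ hcm hi g v) (by simp [appendTermFace, htop])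
    (fun i k hik hk => appendTermFace_of_lt Θ hik hk g v)

section WordMetric
variable {Γ : Type} [Group Γ] {S : Set Γ}

lemma wordLen_prod_le_length {l : List Γ} (hl : ∀ x ∈ l, x ∈ S) :
    wordLen S l.prod ≤ l.length :=
  Nat.sInf_le ⟨l, hl, rfl, rfl⟩

lemma exists_word_length_eq_wordLen (hsym : ∀ s ∈ S, s⁻¹ ∈ S)
    (hgen : Subgroup.closure S = ⊤) (g : Γ) :
    ∃ l : List Γ, (∀ x ∈ l, x ∈ S) ∧ l.length = wordLen S g ∧ l.prod = g := by
  refine Nat.sInf_mem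
    (s := {n | ∃ l : List Γ, (∀ x ∈ l, x ∈ S) ∧ l.length = n ∧ l.prod = g}) ?_
  have hg : g ∈ Submonoid.closure (S ∪ S⁻¹) := by
    rw [← Subgroup.closure_toSubmonoid, hgen]
    trivial
  obtain ⟨l, hl, rfl⟩ := Submonoid.exists_list_of_mem_closure hg
  refine ⟨l.length, l, fun x hx => ?_, rfl, rfl⟩
  rcases hl x hx with h | h
  · exact h
  · simpa using hsym _ h

lemma wordLen_mul_le (hsym : ∀ s ∈ S, s⁻¹ ∈ S) (hgen : Subgroup.closure S = ⊤)
    (g h : Γ) :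
    wordLen S (g * h) ≤ wordLen S g + wordLen S h := by
  obtain ⟨l₁, hl₁, hlen₁, rfl⟩ := exists_word_length_eq_wordLen hsym hgen g
  obtain ⟨l₂, hl₂, hlen₂, rfl⟩ := exists_word_length_eq_wordLen hsym hgen h
  rw [← hlen₁, ← hlen₂, ← List.length_append, ← List.prod_append]
  exact wordLen_prod_le_length fun x hx => (List.mem_append.1 hx).elim (hl₁ x) (hl₂ x)

lemma wordLen_inv_le (hsym : ∀ s ∈ S, s⁻¹ ∈ S) (hgen : Subgroup.closure S = ⊤) (g : Γ) :
    wordLen S g⁻¹ ≤ wordLen S g := by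
  obtain ⟨l, hl, hlen, rfl⟩ := exists_word_length_eq_wordLen hsym hgen g
  rw [← hlen, List.prod_inv_reverse, ← List.length_map (f := fun x : Γ => x⁻¹),
    ← List.length_reverse]
  refine wordLen_prod_le_length fun x hx => ?_
  obtain ⟨y, hy, rfl⟩ := List.mem_map.1 (List.mem_reverse.1 hx)
  exact hsym y (hl y hy)

lemma dS_self (g : Γ) : dS S g g = 0 := by
  simpa [dS] using wordLen_prod_le_length (S := S) (l := []) (by simp)

lemma dS_comm (hsym : ∀ s ∈ S, s⁻¹ ∈ S) (hgen : Subgroup.closure S = ⊤) (g h : Γ) :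
    dS S g h = dS S h g :=
  le_antisymm (by simpa [dS] using wordLen_inv_le hsym hgen (h⁻¹ * g))
    (by simpa [dS] using wordLen_inv_le hsym hgen (g⁻¹ * h))

lemma dS_mul_left (v g h : Γ) : dS S (v * g) (v * h) = dS S g h := by
  simp [dS, mul_assoc]

lemma dS_triangle (hsym : ∀ s ∈ S, s⁻¹ ∈ S) (hgen : Subgroup.closure S = ⊤)
    (g k h : Γ) :
    dS S g h ≤ dS S g k + dS S k h := by
  simpa [dS, mul_assoc] using wordLen_mul_le hsym hgen (g⁻¹ * k) (k⁻¹ * h)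

lemma dS_le_sum_Ico (hsym : ∀ s ∈ S, s⁻¹ ∈ S) (hgen : Subgroup.closure S = ⊤)
    (x : ℕ → Γ) {p q : ℕ} (hpq : p ≤ q) :
    dS S (x p) (x q) ≤ ∑ t ∈ Finset.Ico p q, dS S (x t) (x (t+1)) := by
  induction q, hpq using Nat.le_induction with
  | base => simp [dS_self]
  | succ q hpq ih =>
    rw [Finset.sum_Ico_succ_top hpq]
    exact (dS_triangle hsym hgen _ (x q) _).trans (Nat.add_le_add_right ih _)

end WordMetric

section L1
variable {β γ : Type}

def l1 (c : β →₀ ℂ) : ℝ := ∑ t ∈ c.support, ‖c t‖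

lemma l1_eq_sum_of_support_subset {c : β →₀ ℂ} {s : Finset β} (hs : c.support ⊆ s) :
    l1 c = ∑ t ∈ s, ‖c t‖ :=
  Finset.sum_subset hs fun t _ ht => by simp [notMem_support_iff.1 ht]

lemma l1_add_le (c₁ c₂ : β →₀ ℂ) : l1 (c₁ + c₂) ≤ l1 c₁ + l1 c₂ := by
  classical
  rw [l1_eq_sum_of_support_subset support_add,
    l1_eq_sum_of_support_subset (Finset.subset_union_left (s₂ := c₂.support)),
    l1_eq_sum_of_support_subset (Finset.subset_union_right (s₁ := c₁.support)),
    ← Finset.sum_add_distrib]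
  exact Finset.sum_le_sum fun t _ => norm_add_le _ _

lemma l1_sum_le {ι : Type} (s : Finset ι) (f : ι → β →₀ ℂ) :
    l1 (∑ i ∈ s, f i) ≤ ∑ i ∈ s, l1 (f i) :=
  Finset.le_sum_of_subadditive l1 (by simp [l1]) l1_add_le s f

lemma l1_smul (a : ℂ) (c : β →₀ ℂ) : l1 (a • c) = ‖a‖ * l1 c := by
  rcases eq_or_ne a 0 with rfl | ha
  · simp [l1]
  · simp [l1, support_smul_eq ha, Finset.mul_sum]

lemma l1_mapDomain_le (f : β → γ) (c : β →₀ ℂ) : l1 (mapDomain f c) ≤ l1 c := by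
  refine (l1_sum_le _ _).trans (Finset.sum_le_sum fun a _ => ?_)
  rcases eq_or_ne (c a) 0 with h | h
  · simp [h, l1]
  · simp [l1, h]

end L1

section Weights
variable {Γ : Type} [Group Γ] {S : Set Γ}

lemma twt_eq_sum_range (v : Γ) {p : ℕ} (x : Fin (p+1) → Γ) :
    twt S v x = ∑ t ∈ Finset.range p, dS S (tupleSeq x t) (tupleSeq x (t+1))
      + dS S (tupleSeq x p) (v * tupleSeq x 0) := by
  rw [twt, ← Fin.sum_univ_eq_sum_range (fun t => dS S (tupleSeq x t) (tupleSeq x (t+1))),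
    tupleSeq_of_le x le_rfl, tupleSeq_of_le x (Nat.zero_le p)]
  congr 1
  refine Finset.sum_congr rfl fun j _ => ?_
  rw [tupleSeq_of_le x j.isLt.le, tupleSeq_of_le x j.isLt]
  rfl

lemma twt_appendTuple {n i : ℕ} (hin : i ≤ n) (v : Γ) (g : Fin (n+1) → Γ)
    (a : Fin (i+1) → Γ) :
    twt S v (appendTuple i g a) =
      ∑ t ∈ Finset.range i, dS S (tupleSeq a t) (tupleSeq a (t+1))
        + dS S (tupleSeq a i) (tupleSeq g i)
        + ∑ t ∈ Finset.Ico i n, dS S (tupleSeq g t) (tupleSeq g (t+1))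
        + dS S (tupleSeq g n) (v * tupleSeq a 0) := by
  rw [twt_eq_sum_range, ← Finset.sum_range_add_sum_Ico _ (by omega : i + 1 ≤ n + 1),
    Finset.sum_range_succ, ← Finset.sum_Ico_add' (c := 1)]
  simp only [tupleSeq_appendTuple hin]
  congr 1
  congr 1
  congr 1
  · refine Finset.sum_congr rfl fun t ht => ?_
    have := Finset.mem_range.1 ht
    rw [if_pos (by omega), if_pos (by omega)]
  · rw [if_pos le_rfl, if_neg (by omega), Nat.add_sub_cancel]
  · refine Finset.sum_congr rfl fun t ht => ?_
    have := (Finset.mem_Ico.1 ht).1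
    rw [if_neg (by omega), if_neg (by omega), Nat.add_sub_cancel, Nat.add_sub_cancel]
  · rw [if_neg (by omega), if_pos (Nat.zero_le _), Nat.add_sub_cancel]

lemma dS_add_dS_le_of_detour (hsym : ∀ s ∈ S, s⁻¹ ∈ S) (hgen : Subgroup.closure S = ⊤)
    (x : ℕ → Γ) {p q i : ℕ} (hpq : p ≤ q) (hqi : q ≤ i) {w b : Γ} {C : ℝ}
    (hw : (dS S (x p) w : ℝ) + dS S w (x q) ≤ dS S (x p) (x q) + C) :
    (dS S (x 0) b : ℝ) + dS S w (x i) ≤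
      ∑ t ∈ Finset.range i, (dS S (x t) (x (t+1)) : ℝ) + dS S w b + C := by
  have tri : ∀ y z u : Γ, (dS S y u : ℝ) ≤ dS S y z + dS S z u := fun y z u => by
    exact_mod_cast dS_triangle hsym hgen y z u
  have path : ∀ {r s : ℕ}, r ≤ s →
      (dS S (x r) (x s) : ℝ) ≤ ∑ t ∈ Finset.Ico r s, (dS S (x t) (x (t+1)) : ℝ) :=
    fun h => by
    exact_mod_cast dS_le_sum_Ico hsym hgen x h
  rw [Finset.range_eq_Ico, ← Finset.sum_Ico_consecutive _ (Nat.zero_le q) hqi,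
    ← Finset.sum_Ico_consecutive _ (Nat.zero_le p) hpq]
  linarith [tri (x 0) (x p) b, tri (x p) w b, tri w (x q) (x i), path (Nat.zero_le p), path hpq,
    path hqi]

lemma twt_appendTuple_le (hsym : ∀ s ∈ S, s⁻¹ ∈ S) (hgen : Subgroup.closure S = ⊤)
    {n i : ℕ} (hin : i ≤ n) (v : Γ) (g : Fin (n+1) → Γ) (a : Fin (i+1) → Γ) {R C : ℝ}
    (hR : ∀ j j', (dS S (a j) (a j') : ℝ) ≤ R)
    (hgeo : a (Fin.last i) ∈ geodN S C (Set.range (frontTupleNat i g))) :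
    (twt S v (appendTuple i g a) : ℝ) ≤ twt S v g + (i + 1) * R + C := by
  set â := tupleSeq a
  set ĝ := tupleSeq g
  have hRâ : ∀ s t, (dS S (â s) (â t) : ℝ) ≤ R := fun _ _ => hR _ _
  obtain ⟨p, q, hpq, hqi, hw⟩ : ∃ p q, p ≤ q ∧ q ≤ i ∧
      (dS S (ĝ p) (â i) : ℝ) + dS S (â i) (ĝ q) ≤ dS S (ĝ p) (ĝ q) + C := by
    obtain ⟨_, ⟨p, rfl⟩, _, ⟨q, rfl⟩, h⟩ := hgeo
    rw [show a (Fin.last i) = â i from (tupleSeq_of_le a le_rfl).symm] at h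
    rcases le_total (p : ℕ) q with hpq | hqp
    · exact ⟨p, q, hpq, by omega, h⟩
    · refine ⟨q, p, hqp, by omega, ?_⟩
      rw [dS_comm hsym hgen (ĝ q), dS_comm hsym hgen _ (ĝ p), dS_comm hsym hgen (ĝ q)]
      exact (add_comm _ _).trans_le h
  have hdetour := dS_add_dS_le_of_detour hsym hgen ĝ hpq hqi (b := â 0) hw
  have hlast : (dS S (ĝ n) (v * â 0) : ℝ) ≤ dS S (ĝ n) (v * ĝ 0) + dS S (ĝ 0) (â 0) := by
    rw [← dS_mul_left v (ĝ 0) (â 0)]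
    exact_mod_cast dS_triangle hsym hgen _ _ _
  have hfront : ∑ t ∈ Finset.range i, (dS S (â t) (â (t+1)) : ℝ) ≤ i * R := by
    simpa using Finset.sum_le_card_nsmul (Finset.range i) _ R fun t _ => hRâ t (t+1)
  have hsplit := Finset.sum_range_add_sum_Ico (fun t => (dS S (ĝ t) (ĝ (t+1)) : ℝ)) hin
  rw [twt_appendTuple hin, twt_eq_sum_range]
  push_cast
  linarith [hRâ i 0]

end Weights

section Estimates
variable {Γ : Type} [Group Γ] {S : Set Γ} (Θ : ∀ n, BarC Γ n →ₗ[ℂ] BarC Γ n)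

lemma mem_support_nablaT_single {n : ℕ} {g : Fin (n+1) → Γ} {v : Γ}
    {y : (Fin (n+2) → Γ) × Γ}
    (hy : y ∈ (nablaT Θ n (single (g, v) 1)).support) :
    ∃ i ≤ n, ∃ a ∈ (Θ i (single (frontTupleNat i g) 1)).support,
      y = (appendTuple i g a, v) := by
  classical
  rw [nablaT_single] at hy
  obtain ⟨i, hi, hyi⟩ := Finset.mem_biUnion.1 (support_finsetSum hy)
  obtain ⟨a, ha, rfl⟩ := Finset.mem_image.1 (mapDomain_support (support_smul hyi))
  exact ⟨i, Nat.lt_succ_iff.1 (Finset.mem_range.1 hi), a, ha, rfl⟩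

lemma twt_le_of_mem_support_nablaT (hsym : ∀ s ∈ S, s⁻¹ ∈ S)
    (hgen : Subgroup.closure S = ⊤)
    {d : ℕ} {R C : ℝ} (hR : 0 ≤ R) (hd : ∀ n, d ≤ n → Θ n = 0)
    (hrips : ∀ (n : ℕ) (c : BarC Γ n), InRips S R (Θ n c))
    (hsupp : ∀ (n : ℕ) (t : Fin (n+1) → Γ),
      chainSupp (Θ n (single t 1)) ⊆ geodN S C (Set.range t))
    {n : ℕ} (g : Fin (n+1) → Γ) (v : Γ) {y : (Fin (n+2) → Γ) × Γ}
    (hy : y ∈ (nablaT Θ n (single (g, v) 1)).support) :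
    (twt S y.2 y.1 : ℝ) ≤ twt S v g + (d * R + C) := by
  obtain ⟨i, hin, a, ha, rfl⟩ := mem_support_nablaT_single Θ hy
  have hid : i < d := by
    by_contra h
    simp [hd i (not_lt.1 h)] at ha
  have happend := twt_appendTuple_le hsym hgen hin v g a (hrips i _ a ha)
    (hsupp i _ ⟨a, ha, Fin.last i, rfl⟩)
  have hiR : ((i : ℝ) + 1) * R ≤ d * R :=
    mul_le_mul_of_nonneg_right (by exact_mod_cast hid) hR
  linarith

lemma tupDiam_frontTupleNat_le (hsym : ∀ s ∈ S, s⁻¹ ∈ S) (hgen : Subgroup.closure S = ⊤)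
    {n i N : ℕ} (hiN : i ≤ N) (g : Fin (n+1) → Γ) :
    tupDiam S (frontTupleNat i g) ≤
      ∑ t ∈ Finset.range N, dS S (tupleSeq g t) (tupleSeq g (t+1)) := by
  have hpath : ∀ r s : ℕ, r ≤ s → s ≤ N → dS S (tupleSeq g r) (tupleSeq g s) ≤
      ∑ t ∈ Finset.range N, dS S (tupleSeq g t) (tupleSeq g (t+1)) := fun r s hrs hs =>
    (dS_le_sum_Ico hsym hgen _ hrs).trans (Finset.sum_le_sum_of_subset
      (Finset.range_eq_Ico N ▸ Finset.Ico_subset_Ico (Nat.zero_le r) hs))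
  refine Finset.sup_le fun ⟨p, q⟩ _ => ?_
  rcases le_total (p : ℕ) q with h | h
  · exact hpath p q h (by omega)
  · rw [frontTupleNat, frontTupleNat, dS_comm hsym hgen]
    exact hpath q p h (by omega)

lemma l1T_nablaT_single_le (hsym : ∀ s ∈ S, s⁻¹ ∈ S) (hgen : Subgroup.closure S = ⊤)
    {d : ℕ} {C : ℝ} (hC : 0 ≤ C) (hd : ∀ n, d ≤ n → Θ n = 0)
    (hnorm : ∀ (n : ℕ) (t : Fin (n+1) → Γ),
      l1norm (Θ n (single t 1)) ≤ C * ((tupDiam S t : ℝ) + 1))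
    {n : ℕ} (g : Fin (n+1) → Γ) (v : Γ) :
    l1T (nablaT Θ n (single (g, v) 1)) ≤
      d * C *
        (1 + ∑ t ∈ Finset.range (min n d), (dS S (tupleSeq g t) (tupleSeq g (t+1)) : ℝ)) := by
  set D := ∑ t ∈ Finset.range (min n d), (dS S (tupleSeq g t) (tupleSeq g (t+1)) : ℝ)
  have hD : 0 ≤ D := Finset.sum_nonneg fun _ _ => Nat.cast_nonneg _
  have hterm : ∀ i ∈ Finset.range (n+1),
      l1 ((-1:ℂ)^i • appendTerm Θ g g v i) ≤ if i < d then C * (1 + D) else 0 := by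
    intro i hi
    rw [l1_smul, norm_pow, norm_neg, norm_one, one_pow, one_mul]
    split_ifs with hid
    · have hdiam : (tupDiam S (frontTupleNat i g) : ℝ) ≤ D := by
        simpa [D] using (Nat.cast_le (α := ℝ)).2
          (tupDiam_frontTupleNat_le hsym hgen (N := min n d) (by simp at hi; omega) g)
      refine (l1_mapDomain_le _ _).trans ((hnorm i (frontTupleNat i g)).trans ?_)
      nlinarith
    · simp [appendTerm, hd i (not_lt.1 hid), l1]
  have hcard : ((Finset.range (n+1)).filter (· < d)).card ≤ d :=
    (Finset.card_le_card fun i hi => by simp at hi ⊢; omega).trans_eq (Finset.card_range d)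
  calc l1T (nablaT Θ n (single (g, v) 1))
      = l1 (∑ i ∈ Finset.range (n+1), (-1:ℂ)^i • appendTerm Θ g g v i) := by
        rw [nablaT_single]; rfl
    _ ≤ ∑ i ∈ Finset.range (n+1), if i < d then C * (1 + D) else 0 :=
        (l1_sum_le _ _).trans (Finset.sum_le_sum hterm)
    _ ≤ d * C * (1 + D) := by
        rw [Finset.sum_ite, Finset.sum_const_zero, add_zero, Finset.sum_const, nsmul_eq_mul,
          mul_assoc]
        exact mul_le_mul_of_nonneg_right (by exact_mod_cast hcard) (by positivity)

lemma sum_dS_fin_eq_sum_range {n N : ℕ} (hN : N ≤ n) (g : Fin (n+1) → Γ) :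
    ∑ j : Fin N,
        (dS S (g ⟨j, by have := j.isLt; omega⟩) (g ⟨j+1, by have := j.isLt; omega⟩) : ℝ)
      = ∑ t ∈ Finset.range N, (dS S (tupleSeq g t) (tupleSeq g (t+1)) : ℝ) := by
  rw [← Fin.sum_univ_eq_sum_range (fun t => (dS S (tupleSeq g t) (tupleSeq g (t+1)) : ℝ))]
  refine Finset.sum_congr rfl fun j _ => ?_
  rw [tupleSeq_of_le g (by have := j.isLt; omega), tupleSeq_of_le g (by have := j.isLt; omega)]

end Estimates

/-- given a controlled Γ-equivariant retraction `Θ'` of the Bar complex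
onto a Rips complex (as produced in Statement 15), the operator
`∇̃[g₀,…,gₙ;v] = Σᵢ(−1)^i[Θ'([g₀,…,g_i]), g_i,…,gₙ;v]` of the twisted Bar complex:
(i) is a contracting homotopy in degrees ≥ d; (ii) increases weights by at most an
additive constant; (iii) has `ℓ¹`-norm controlled linearly by partial weights. -/
theorem nabla_properties {Γ : Type} [Group Γ] (S : Set Γ) (δ : ℝ)
    (hS : IsHypGroup S δ) (R : ℝ) (hR : 0 < R) (d : ℕ) (C₁₈ C₁₉ : ℝ)
    (hC₁₈ : 0 ≤ C₁₈) (hC₁₉ : 0 ≤ C₁₉)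
    (Θ' : ∀ n, BarC Γ n →ₗ[ℂ] BarC Γ n)
    (hcm : ∀ n, (barD Γ n).comp (Θ' (n+1)) = (Θ' n).comp (barD Γ n))
    (h0 : Θ' 0 = LinearMap.id)
    (hd : ∀ n, d ≤ n → Θ' n = 0)
    (hrips : ∀ (n : ℕ) (c : BarC Γ n), InRips S R (Θ' n c))
    (hsupp : ∀ (n : ℕ) (t : Fin (n+1) → Γ),
      chainSupp (Θ' n (Finsupp.single t 1)) ⊆ geodN S C₁₈ (Set.range t))
    (hnorm : ∀ (n : ℕ) (t : Fin (n+1) → Γ),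
      l1norm (Θ' n (Finsupp.single t 1)) ≤ C₁₉ * ((tupDiam S t : ℝ) + 1)) :
    -- (i) contracting homotopy in degrees ≥ d
    (∀ m : ℕ, d ≤ m + 1 →
      (tbarD Γ (m+1)).comp (nablaT Θ' (m+1)) + (nablaT Θ' m).comp (tbarD Γ m) =
        LinearMap.id) ∧
    -- (ii) weight control
    (∃ C₂₀ : ℝ, 0 ≤ C₂₀ ∧
      ∀ (n : ℕ) (g : Fin (n+1) → Γ) (v : Γ),
        ∀ y ∈ (nablaT Θ' n (Finsupp.single (g, v) 1)).support,
          (twt S y.2 y.1 : ℝ) ≤ (twt S v g : ℝ) + C₂₀) ∧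
    -- (iii) ℓ¹-norm control
    (∃ C₂₁ : ℝ, 0 ≤ C₂₁ ∧
      ∀ (n : ℕ) (g : Fin (n+1) → Γ) (v : Γ),
        l1T (nablaT Θ' n (Finsupp.single (g, v) 1)) ≤
          C₂₁ * (1 + ∑ j : Fin (min n d),
            (dS S (g ⟨(j:ℕ), by have := j.isLt; omega⟩)
                  (g ⟨(j:ℕ)+1, by have := j.isLt; omega⟩) : ℝ))) := by
  obtain ⟨-, hsym, hgen, -⟩ := hS
  refine ⟨fun m hm => tbarD_comp_nablaT_add_nablaT_comp_tbarD Θ' hcm h0 (hd (m+1) hm),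
    ⟨d * R + C₁₈, by positivity, fun n g v y hy =>
      twt_le_of_mem_support_nablaT Θ' hsym hgen hR.le hd hrips hsupp g v hy⟩,
    ⟨d * C₁₉, by positivity, fun n g v => ?_⟩⟩
  rw [sum_dS_fin_eq_sum_range (min_le_left n d)]
  exact l1T_nablaT_single_le Θ' hsym hgen hC₁₉ hd hnorm g v
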